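/- Let N ≥ 11 be an integer and let p > p_c. Suppose w : ℝ^N → ℝ is a nonnegative function satisfying w(x) ≤ β^{1/(p−1)} |x|^{−2/(p−1)} for all x ≠ 0. Then there exists ε > 0 such that for every φ ∈ C_c^∞(ℝ^N): (p+ε) ∫_{ℝ^N} w(x)^{p−1} φ(x)² dx ≤ ∫_{ℝ^N} |∇φ(x)|² dx. -/

import Mathlib

open MeasureTheory

noncomputable section

/-- Euclidean space ℝ^N. -/
abbrev Euc (N : ℕ) := EuclideanSpace ℝ (Fin N)

/-- The Joseph–Lundgren exponent for `N ≥ 11`. -/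
def pJL (N : ℕ) : ℝ :=
  (((N : ℝ) - 2) ^ 2 - 4 * N + 8 * Real.sqrt ((N : ℝ) - 1)) /
    (((N : ℝ) - 2) * ((N : ℝ) - 10))

/-- `β(p, N) = (2/(p-1)) (N - 2 - 2/(p-1))`. -/
def betaC (p : ℝ) (N : ℕ) : ℝ := 2 / (p - 1) * ((N : ℝ) - 2 - 2 / (p - 1))


open Set ENNReal

lemma alg_main (N : ℕ) (hN : 11 ≤ N) (p : ℝ) (hp : pJL N < p) :
    1 < p ∧ 0 < betaC p N ∧ p * betaC p N < (((N : ℝ) - 2) ^ 2) / 4 := by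
  have hn : (11 : ℝ) ≤ (N : ℝ) := by exact_mod_cast hN
  obtain ⟨s, hs_def⟩ : ∃ s : ℝ, s = Real.sqrt ((N : ℝ) - 1) := ⟨_, rfl⟩
  have hs0 : 0 ≤ s := hs_def ▸ Real.sqrt_nonneg _
  have hs2 : s ^ 2 = (N : ℝ) - 1 := hs_def ▸ Real.sq_sqrt (by linarith)
  have hden : 0 < ((N : ℝ) - 2) * ((N : ℝ) - 10) := by nlinarith
  have hslt : s < ((N : ℝ) - 4) / 2 := by
    rw [hs_def]
    exact (Real.sqrt_lt' (by linarith)).2 (by nlinarith)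
  obtain ⟨t₀, ht₀_def⟩ : ∃ t₀ : ℝ, t₀ = ((N : ℝ) - 4) / 2 - s := ⟨_, rfl⟩
  have ht₀ : 0 < t₀ := by rw [ht₀_def]; linarith
  have hkey : pJL N - 1 = 2 / t₀ := by
    rw [pJL, ← hs_def, div_sub_one hden.ne', div_eq_div_iff hden.ne' ht₀.ne', ht₀_def]
    linear_combination (-8 : ℝ) * hs2
  have hp1 : 1 < p := by
    have h1 : 0 < 2 / t₀ := by positivity
    linarith [hkey, hp]
  have hpm1 : 0 < p - 1 := by linarith
  have ht_lt : 2 / (p - 1) < t₀ := by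
    have h2 : 2 / t₀ < p - 1 := by linarith [hkey, hp]
    rw [div_lt_iff₀ ht₀] at h2
    rw [div_lt_iff₀ hpm1]
    nlinarith
  obtain ⟨t, ht_def⟩ : ∃ t : ℝ, t = 2 / (p - 1) := ⟨_, rfl⟩
  have ht0 : 0 < t := by rw [ht_def]; positivity
  have htlt : t < t₀ := ht_def ▸ ht_lt
  have hbeta : betaC p N = t * ((N : ℝ) - 2 - t) := by rw [betaC, ht_def]
  have hb : 0 < betaC p N := by
    rw [hbeta]; apply mul_pos ht0; rw [ht₀_def] at htlt; linarith
  refine ⟨hp1, hb, ?_⟩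
  have hpt : p * betaC p N = (t + 2) * ((N : ℝ) - 2 - t) := by
    rw [hbeta, ht_def]; field_simp; ring
  rw [hpt, ht₀_def] at *
  nlinarith [mul_pos (sub_pos.2 htlt) (show 0 < ((N:ℝ) - 4) / 2 + s - t by linarith)]



lemma restrict_to_interval (f : ℝ → ℝ) (hf : Continuous f) (R : ℝ) (hR : 0 < R)
    (h0 : ∀ r, R ≤ r → f r = 0) :
    ∫ r in Set.Ioi (0:ℝ), f r = ∫ r in (0:ℝ)..R, f r := by
  rw [intervalIntegral.integral_of_le hR.le, ← Set.Ioc_union_Ioi_eq_Ioi hR.le,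
    MeasureTheory.setIntegral_union (Set.Ioc_disjoint_Ioi le_rfl) measurableSet_Ioi
      hf.integrableOn_Ioc ?_]
  · rw [MeasureTheory.setIntegral_congr_fun measurableSet_Ioi
      (fun x hx => h0 x (le_of_lt hx)), integral_zero, add_zero]
  · exact (integrableOn_congr_fun (fun x hx => h0 x (le_of_lt hx)) measurableSet_Ioi).2
      integrableOn_zero

lemma integrableOn_Ioi_of_vanish (f : ℝ → ℝ) (hf : Continuous f) (R : ℝ) (hR : 0 < R)
    (h0 : ∀ r, R ≤ r → f r = 0) : IntegrableOn f (Set.Ioi (0:ℝ)) := by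
  rw [← Set.Ioc_union_Ioi_eq_Ioi hR.le]
  exact hf.integrableOn_Ioc.union
    (((integrableOn_congr_fun (fun x hx => h0 x (le_of_lt hx)) measurableSet_Ioi).2
      integrableOn_zero))

lemma hardy1d (m : ℕ) (ψ ψ' : ℝ → ℝ) (hd : ∀ r, HasDerivAt ψ (ψ' r) r)
    (hc' : Continuous ψ') (R : ℝ) (hR : 0 < R)
    (h0 : ∀ r, R ≤ r → ψ r = 0) (h0' : ∀ r, R ≤ r → ψ' r = 0) :
    ((m : ℝ) + 1) ^ 2 / 4 * ∫ r in Set.Ioi (0:ℝ), r ^ m * ψ r ^ 2 ≤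
      ∫ r in Set.Ioi (0:ℝ), r ^ (m + 2) * ψ' r ^ 2 := by
  have hc : Continuous ψ := by
    rw [continuous_iff_continuousAt]; exact fun r => (hd r).continuousAt
  have cf1 : Continuous fun r : ℝ => r ^ m * ψ r ^ 2 := by fun_prop
  have cf2 : Continuous fun r : ℝ => r ^ (m+1) * (ψ r * ψ' r) := by fun_prop
  have cf3 : Continuous fun r : ℝ => r ^ (m+2) * ψ' r ^ 2 := by fun_prop
  have e1 : ∫ r in Set.Ioi (0:ℝ), r ^ m * ψ r ^ 2 = ∫ r in (0:ℝ)..R, r ^ m * ψ r ^ 2 :=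
    restrict_to_interval _ cf1 R hR (fun r hr => by rw [h0 r hr]; ring)
  have e3 : ∫ r in Set.Ioi (0:ℝ), r ^ (m+2) * ψ' r ^ 2 = ∫ r in (0:ℝ)..R, r ^ (m+2) * ψ' r ^ 2 :=
    restrict_to_interval _ cf3 R hR (fun r hr => by rw [h0' r hr]; ring)
  set A : ℝ := ∫ r in (0:ℝ)..R, r ^ m * ψ r ^ 2 with hA
  set B : ℝ := ∫ r in (0:ℝ)..R, r ^ (m+2) * ψ' r ^ 2 with hB
  set D : ℝ := ∫ r in (0:ℝ)..R, r ^ (m+1) * (ψ r * ψ' r) with hD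
  -- FTC : (m+1) A + 2 D = 0
  have hu : ∀ r : ℝ, HasDerivAt (fun r : ℝ => r ^ (m+1) * ψ r ^ 2)
      (((m:ℝ)+1) * (r ^ m * ψ r ^ 2) + 2 * (r ^ (m+1) * (ψ r * ψ' r))) r := by
    intro r
    have h1 : HasDerivAt (fun r : ℝ => r ^ (m+1)) (((m:ℝ)+1) * r ^ m) r := by
      simpa using hasDerivAt_pow (m+1) r
    have h2 : HasDerivAt (fun r : ℝ => ψ r ^ 2) (2 * ψ r * ψ' r) r := by
      simpa using (hd r).fun_pow 2
    have := h1.mul h2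
    exact this.congr_deriv (by ring)
  have hFTC : ((m:ℝ)+1) * A + 2 * D = 0 := by
    have hint := intervalIntegral.integral_eq_sub_of_hasDerivAt
      (f := fun r : ℝ => r ^ (m+1) * ψ r ^ 2) (fun r _ => hu r)
      ((Continuous.intervalIntegrable (by fun_prop :
        Continuous fun r : ℝ => ((m:ℝ)+1) * (r ^ m * ψ r ^ 2) + 2 * (r ^ (m+1) * (ψ r * ψ' r)))) 0 R)
    rw [intervalIntegral.integral_add ((cf1.intervalIntegrable 0 R).const_mul _)
      ((cf2.intervalIntegrable 0 R).const_mul _),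
      intervalIntegral.integral_const_mul, intervalIntegral.integral_const_mul] at hint
    rw [← hA, ← hD] at hint
    rw [hint]
    simp [h0 R le_rfl]
  -- pointwise AM-GM with l = (m+1)/2
  have hl : 0 < ((m:ℝ)+1)/2 := by positivity
  have hmono : -(2*(((m:ℝ)+1)/2)) * D ≤ (((m:ℝ)+1)/2)^2 * A + B := by
    have := intervalIntegral.integral_mono_on (μ := volume) hR.le
      ((cf2.intervalIntegrable 0 R).const_mul (-(2*(((m:ℝ)+1)/2))))
      (((cf1.intervalIntegrable 0 R).const_mul ((((m:ℝ)+1)/2)^2)).add (cf3.intervalIntegrable 0 R))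
      (fun r hr => ?_)
    · rwa [intervalIntegral.integral_add ((cf1.intervalIntegrable 0 R).const_mul _)
        (cf3.intervalIntegrable 0 R), intervalIntegral.integral_const_mul,
        intervalIntegral.integral_const_mul] at this
    · have hr0 : 0 ≤ r := hr.1
      have key : 0 ≤ r ^ m * ((((m:ℝ)+1)/2) * ψ r + r * ψ' r)^2 := by positivity
      have e1' : r ^ (m+1) = r ^ m * r := pow_succ r m
      have e2' : r ^ (m+2) = r ^ m * r ^ 2 := by rw [pow_add]
      rw [e1', e2']
      nlinarith [key]
  -- combine
  have h5 : ((m:ℝ)+1)*(((m:ℝ)+1) * A + 2 * D) = ((m:ℝ)+1) * 0 := by rw [hFTC]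
  have hAB : ((m:ℝ)+1)^2/4 * A ≤ B := by ring_nf at h5 hmono ⊢; linarith [h5, hmono]
  rw [e1, e3]; exact hAB

lemma lintegral_polar (N : ℕ) (hN : 1 ≤ N) (g : Euc N → ℝ≥0∞) (hg : Measurable g) :
    ∫⁻ x, g x = ∫⁻ ω : Metric.sphere (0 : Euc N) 1,
      ∫⁻ r in Set.Ioi (0:ℝ), ENNReal.ofReal (r ^ (N - 1)) * g (r • (ω : Euc N)) ∂volume
        ∂((volume : Measure (Euc N)).toSphere) := by
  have hdim : Module.finrank ℝ (Euc N) = N := finrank_euclideanSpace_fin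
  haveI : Nontrivial (Euc N) := by
    apply Module.nontrivial_of_finrank_pos (R := ℝ) (M := Euc N)
    rw [hdim]; omega
  have hmp := (volume : Measure (Euc N)).measurePreserving_homeomorphUnitSphereProd
  rw [hdim] at hmp
  have hsmul : Continuous fun p : Metric.sphere (0 : Euc N) 1 × Set.Ioi (0:ℝ) =>
      (p.2 : ℝ) • (p.1 : Euc N) :=
    (continuous_subtype_val.comp continuous_snd).smul
      (continuous_subtype_val.comp continuous_fst)
  have hG : Measurable fun p : Metric.sphere (0 : Euc N) 1 × Set.Ioi (0:ℝ) =>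
      g ((p.2 : ℝ) • (p.1 : Euc N)) := hg.comp hsmul.measurable
  calc ∫⁻ x, g x
      = ∫⁻ x in ({0}ᶜ : Set (Euc N)), g x := by rw [MeasureTheory.restrict_compl_singleton]
    _ = ∫⁻ y : ({0}ᶜ : Set (Euc N)), g y ∂(volume.comap Subtype.val) :=
        (lintegral_subtype_comap (measurableSet_singleton 0).compl _).symm
    _ = ∫⁻ p : Metric.sphere (0 : Euc N) 1 × Set.Ioi (0:ℝ), g ((p.2 : ℝ) • (p.1 : Euc N))
          ∂(((volume : Measure (Euc N)).toSphere).prod (Measure.volumeIoiPow (N - 1))) := by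
        rw [← hmp.lintegral_comp_emb (Homeomorph.measurableEmbedding _)
          (fun p : Metric.sphere (0 : Euc N) 1 × Set.Ioi (0:ℝ) => g ((p.2 : ℝ) • (p.1 : Euc N)))]
        refine lintegral_congr fun y => ?_
        congr 1
        rw [← homeomorphUnitSphereProd_symm_apply_coe, Homeomorph.symm_apply_apply]
    _ = ∫⁻ ω : Metric.sphere (0 : Euc N) 1,
          ∫⁻ r : Set.Ioi (0:ℝ), g ((r : ℝ) • (ω : Euc N)) ∂(Measure.volumeIoiPow (N - 1))
          ∂((volume : Measure (Euc N)).toSphere) := lintegral_prod _ hG.aemeasurable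
    _ = _ := by
        refine lintegral_congr fun ω => ?_
        have hmeas : Measurable fun r : Set.Ioi (0:ℝ) => g ((r : ℝ) • (ω : Euc N)) :=
          hg.comp (measurable_subtype_coe.smul_const _)
        rw [Measure.volumeIoiPow, lintegral_withDensity_eq_lintegral_mul _
          ((measurable_subtype_coe.pow_const _).ennreal_ofReal) hmeas]
        simp only [Pi.mul_apply]
        exact lintegral_subtype_comap measurableSet_Ioi
          (fun x : ℝ => ENNReal.ofReal (x ^ (N - 1)) * g (x • (ω : Euc N)))

lemma hardyN (N : ℕ) (hN : 11 ≤ N) (φ : Euc N → ℝ) (hφ : ContDiff ℝ (⊤ : ℕ∞) φ)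
    (hφc : HasCompactSupport φ) :
    Integrable (fun x : Euc N => φ x ^ 2 * (‖x‖ ^ 2)⁻¹) ∧
      (((N:ℝ) - 2) ^ 2 / 4) * ∫ x : Euc N, φ x ^ 2 * (‖x‖ ^ 2)⁻¹ ≤
        ∫ x : Euc N, ‖gradient φ x‖ ^ 2 := by
  have hn : (11:ℝ) ≤ (N:ℝ) := by exact_mod_cast hN
  have hCpos : 0 < ((N:ℝ) - 2) ^ 2 / 4 := by nlinarith
  set C : ℝ := ((N:ℝ) - 2) ^ 2 / 4 with hC_def
  have hφcont : Continuous φ := hφ.continuous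
  have hfc : Continuous (fderiv ℝ φ) := hφ.continuous_fderiv (by simp)
  have hgrad_eq : ∀ x, gradient φ x
      = (InnerProductSpace.toDual ℝ (Euc N)).symm (fderiv ℝ φ x) := fun x => rfl
  have hgradnorm : ∀ x, ‖gradient φ x‖ = ‖fderiv ℝ φ x‖ := fun x => by
    rw [hgrad_eq x]; exact LinearIsometryEquiv.norm_map _ _
  have hgrad_cont : Continuous (gradient φ) := by
    simp only [funext hgrad_eq]
    exact (LinearIsometryEquiv.continuous _).comp hfc
  have hgradc : HasCompactSupport (gradient φ) := by
    have := hφc.fderiv (𝕜 := ℝ)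
    exact this.comp_left (g := (InnerProductSpace.toDual ℝ (Euc N)).symm) (map_zero _)
  have hRint : Integrable (fun x : Euc N => ‖gradient φ x‖ ^ 2) := by
    have hs2 : HasCompactSupport (fun x : Euc N => ‖gradient φ x‖ ^ 2) :=
      (((hgradc.norm).comp_left (g := fun t : ℝ => t ^ 2) (by simp)))
    exact ((hgrad_cont.norm.pow 2)).integrable_of_hasCompactSupport hs2
  -- support radius
  obtain ⟨R, hR0, hsub⟩ := hφc.isBounded.subset_closedBall_lt 0 0
  -- measurability
  have mf₁ : Measurable fun x : Euc N => φ x ^ 2 * (‖x‖ ^ 2)⁻¹ :=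
    ((hφcont.pow 2).measurable).mul ((measurable_norm.pow_const 2).inv)
  have g₁meas : Measurable fun x : Euc N => ENNReal.ofReal (φ x ^ 2 * (‖x‖ ^ 2)⁻¹) :=
    mf₁.ennreal_ofReal
  have g₂meas : Measurable fun x : Euc N => ENNReal.ofReal (‖gradient φ x‖ ^ 2) :=
    ((hgrad_cont.norm.pow 2).measurable).ennreal_ofReal
  -- polar decomposition of both lintegrals
  have hpolar₁ := lintegral_polar N (by omega) _ g₁meas
  have hpolar₂ := lintegral_polar N (by omega) _ g₂meas
  -- fiberwise inequality
  have fiber : ∀ ω : Metric.sphere (0 : Euc N) 1,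
      (∫⁻ r in Set.Ioi (0:ℝ), ENNReal.ofReal (r ^ (N - 1)) *
        ENNReal.ofReal (φ (r • (ω : Euc N)) ^ 2 * (‖r • (ω : Euc N)‖ ^ 2)⁻¹) ∂volume)
      ≤ ENNReal.ofReal C⁻¹ *
        ∫⁻ r in Set.Ioi (0:ℝ), ENNReal.ofReal (r ^ (N - 1)) *
          ENNReal.ofReal (‖gradient φ (r • (ω : Euc N))‖ ^ 2) ∂volume := by
    intro ω
    have hω : ‖(ω : Euc N)‖ = 1 := by
      have := ω.2; rwa [mem_sphere_zero_iff_norm] at this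
    -- the ray functions
    set ψ : ℝ → ℝ := fun r => φ (r • (ω : Euc N)) with hψ_def
    set ψ' : ℝ → ℝ := fun r => fderiv ℝ φ (r • (ω : Euc N)) (ω : Euc N) with hψ'_def
    have hψd : ∀ r, HasDerivAt ψ (ψ' r) r := by
      intro r
      have h1 : HasDerivAt (fun r : ℝ => r • (ω : Euc N)) (ω : Euc N) r := by
        simpa using (hasDerivAt_id r).smul_const (ω : Euc N)
      exact ((hφ.differentiable (by simp) (r • (ω : Euc N))).hasFDerivAt).comp_hasDerivAt r h1
    have hψ'c : Continuous ψ' :=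
      (hfc.comp (continuous_id.smul continuous_const)).clm_apply continuous_const
    have hnorm_smul : ∀ r : ℝ, 0 < r → ‖r • (ω : Euc N)‖ = r := fun r hr => by
      rw [norm_smul, hω, mul_one, Real.norm_eq_abs, abs_of_pos hr]
    have hout : ∀ r : ℝ, R + 1 ≤ r → (r • (ω : Euc N)) ∉ tsupport φ := by
      intro r hr hmem
      have := mem_closedBall_iff_norm.1 (hsub hmem)
      rw [sub_zero, hnorm_smul r (by linarith)] at this
      linarith
    have h0 : ∀ r, R + 1 ≤ r → ψ r = 0 := fun r hr =>
      show φ (r • (ω : Euc N)) = 0 from image_eq_zero_of_notMem_tsupport (hout r hr)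
    have h0' : ∀ r, R + 1 ≤ r → ψ' r = 0 := by
      intro r hr
      have : fderiv ℝ φ (r • (ω : Euc N)) = 0 := by
        by_contra h
        exact hout r hr (support_fderiv_subset ℝ (Function.mem_support.2 h))
      simp [hψ'_def, this]
    -- 1D Hardy
    have h1d := hardy1d (N - 3) ψ ψ' hψd hψ'c (R + 1) (by linarith) h0 h0'
    have hcast : ((N - 3 : ℕ) : ℝ) + 1 = (N : ℝ) - 2 := by
      have : ((N - 3 : ℕ) : ℝ) = (N : ℝ) - 3 := by
        have : (3:ℕ) ≤ N := by omega
        push_cast [Nat.cast_sub this]; ring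
      rw [this]; ring
    have hexp : N - 3 + 2 = N - 1 := by omega
    rw [hcast, hexp] at h1d
    -- compare ψ'^2 with ‖gradient‖^2
    have hψ'le : ∀ r : ℝ, ψ' r ^ 2 ≤ ‖gradient φ (r • (ω : Euc N))‖ ^ 2 := by
      intro r
      have h1 : |ψ' r| ≤ ‖fderiv ℝ φ (r • (ω : Euc N))‖ := by
        have := (fderiv ℝ φ (r • (ω : Euc N))).le_opNorm (ω : Euc N)
        rw [hω, mul_one] at this
        simpa [hψ'_def, Real.norm_eq_abs] using this
      rw [hgradnorm]
      calc ψ' r ^ 2 = |ψ' r| ^ 2 := (sq_abs _).symm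
        _ ≤ ‖fderiv ℝ φ (r • (ω : Euc N))‖ ^ 2 := by
            apply pow_le_pow_left₀ (abs_nonneg _) h1
    have hgcont : Continuous fun r : ℝ => r ^ (N-1) * ‖gradient φ (r • (ω : Euc N))‖ ^ 2 := by
      fun_prop
    have hgvan : ∀ r, R + 1 ≤ r → r ^ (N-1) * ‖gradient φ (r • (ω : Euc N))‖ ^ 2 = 0 := by
      intro r hr
      have : fderiv ℝ φ (r • (ω : Euc N)) = 0 := by
        by_contra h
        exact hout r hr (support_fderiv_subset ℝ (Function.mem_support.2 h))
      rw [hgradnorm, this]; simp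
    have hIntB : IntegrableOn (fun r : ℝ => r ^ (N-1) * ‖gradient φ (r • (ω : Euc N))‖ ^ 2)
        (Set.Ioi (0:ℝ)) := integrableOn_Ioi_of_vanish _ hgcont (R+1) (by linarith) hgvan
    have hIntB' : IntegrableOn (fun r : ℝ => r ^ (N-1) * ψ' r ^ 2) (Set.Ioi (0:ℝ)) :=
      integrableOn_Ioi_of_vanish _ (by fun_prop) (R+1) (by linarith)
        (fun r hr => by rw [h0' r hr]; ring)
    have hIntA : IntegrableOn (fun r : ℝ => r ^ (N-3) * ψ r ^ 2) (Set.Ioi (0:ℝ)) :=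
      integrableOn_Ioi_of_vanish _ (by fun_prop) (R+1) (by linarith)
        (fun r hr => by rw [h0 r hr]; ring)
    have hmono2 : ∫ r in Set.Ioi (0:ℝ), r ^ (N-1) * ψ' r ^ 2 ≤
        ∫ r in Set.Ioi (0:ℝ), r ^ (N-1) * ‖gradient φ (r • (ω : Euc N))‖ ^ 2 := by
      apply setIntegral_mono_on hIntB' hIntB measurableSet_Ioi
      intro r hr
      have : (0:ℝ) ≤ r ^ (N-1) := pow_nonneg (le_of_lt hr) _
      exact mul_le_mul_of_nonneg_left (hψ'le r) this
    -- real chain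
    set A : ℝ := ∫ r in Set.Ioi (0:ℝ), r ^ (N-3) * ψ r ^ 2 with hA_def
    set B : ℝ := ∫ r in Set.Ioi (0:ℝ), r ^ (N-1) * ‖gradient φ (r • (ω : Euc N))‖ ^ 2 with hB_def
    have hchain : C * A ≤ B := le_trans h1d hmono2
    have hAnn : 0 ≤ A := setIntegral_nonneg measurableSet_Ioi
      (fun r hr => mul_nonneg (pow_nonneg (le_of_lt hr) _) (sq_nonneg _))
    have hBnn : 0 ≤ B := setIntegral_nonneg measurableSet_Ioi
      (fun r hr => mul_nonneg (pow_nonneg (le_of_lt hr) _) (sq_nonneg _))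
    have hAle : A ≤ C⁻¹ * B := by
      rw [← mul_le_mul_iff_right₀ hCpos, ← mul_assoc, mul_inv_cancel₀ hCpos.ne', one_mul]
      exact hchain
    -- convert to lintegrals
    have hL : (∫⁻ r in Set.Ioi (0:ℝ), ENNReal.ofReal (r ^ (N - 1)) *
        ENNReal.ofReal (φ (r • (ω : Euc N)) ^ 2 * (‖r • (ω : Euc N)‖ ^ 2)⁻¹) ∂volume)
        = ENNReal.ofReal A := by
      rw [hA_def, ofReal_integral_eq_lintegral_ofReal hIntA
        ((ae_restrict_iff' measurableSet_Ioi).2 (Filter.Eventually.of_forall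
          fun r hr => mul_nonneg (pow_nonneg (le_of_lt hr) _) (sq_nonneg _)))]
      apply setLIntegral_congr_fun measurableSet_Ioi
      intro r hr
      dsimp only
      rw [← ENNReal.ofReal_mul (pow_nonneg (le_of_lt hr) _), hnorm_smul r hr]
      congr 1
      have hexp2 : r ^ (N-1) = r ^ (N-3) * r ^ 2 := by
        rw [← pow_add]; congr 1; omega
      have hrne : r ≠ 0 := ne_of_gt hr
      rw [hexp2]
      field_simp
      ring
    have hRl : (∫⁻ r in Set.Ioi (0:ℝ), ENNReal.ofReal (r ^ (N - 1)) *
        ENNReal.ofReal (‖gradient φ (r • (ω : Euc N))‖ ^ 2) ∂volume) = ENNReal.ofReal B := by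
      rw [hB_def, ofReal_integral_eq_lintegral_ofReal hIntB
        ((ae_restrict_iff' measurableSet_Ioi).2 (Filter.Eventually.of_forall
          fun r hr => mul_nonneg (pow_nonneg (le_of_lt hr) _) (sq_nonneg _)))]
      apply setLIntegral_congr_fun measurableSet_Ioi
      intro r hr
      exact (ENNReal.ofReal_mul (pow_nonneg (le_of_lt hr) _)).symm
    rw [hL, hRl, ← ENNReal.ofReal_mul (by positivity)]
    exact ENNReal.ofReal_le_ofReal hAle
  -- put the pieces together
  have hRnn : 0 ≤ ∫ x : Euc N, ‖gradient φ x‖ ^ 2 :=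
    integral_nonneg fun x => by positivity
  have hg₂ : (∫⁻ x : Euc N, ENNReal.ofReal (‖gradient φ x‖ ^ 2))
      = ENNReal.ofReal (∫ x : Euc N, ‖gradient φ x‖ ^ 2) :=
    (ofReal_integral_eq_lintegral_ofReal hRint
      (Filter.Eventually.of_forall fun x => by positivity)).symm
  have hkey : (∫⁻ x : Euc N, ENNReal.ofReal (φ x ^ 2 * (‖x‖ ^ 2)⁻¹))
      ≤ ENNReal.ofReal (C⁻¹ * ∫ x : Euc N, ‖gradient φ x‖ ^ 2) := by
    rw [hpolar₁]
    calc ∫⁻ ω : Metric.sphere (0 : Euc N) 1,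
          ∫⁻ r in Set.Ioi (0:ℝ), ENNReal.ofReal (r ^ (N - 1)) *
            ENNReal.ofReal (φ (r • (ω : Euc N)) ^ 2 * (‖r • (ω : Euc N)‖ ^ 2)⁻¹) ∂volume
            ∂((volume : Measure (Euc N)).toSphere)
        ≤ ∫⁻ ω : Metric.sphere (0 : Euc N) 1,
            ENNReal.ofReal C⁻¹ *
            ∫⁻ r in Set.Ioi (0:ℝ), ENNReal.ofReal (r ^ (N - 1)) *
              ENNReal.ofReal (‖gradient φ (r • (ω : Euc N))‖ ^ 2) ∂volume
            ∂((volume : Measure (Euc N)).toSphere) := lintegral_mono fiber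
      _ = ENNReal.ofReal C⁻¹ * ∫⁻ ω : Metric.sphere (0 : Euc N) 1,
            ∫⁻ r in Set.Ioi (0:ℝ), ENNReal.ofReal (r ^ (N - 1)) *
              ENNReal.ofReal (‖gradient φ (r • (ω : Euc N))‖ ^ 2) ∂volume
            ∂((volume : Measure (Euc N)).toSphere) :=
          lintegral_const_mul' _ _ ENNReal.ofReal_ne_top
      _ = ENNReal.ofReal C⁻¹ * ENNReal.ofReal (∫ x : Euc N, ‖gradient φ x‖ ^ 2) := by
          rw [← hpolar₂, hg₂]
      _ = ENNReal.ofReal (C⁻¹ * ∫ x : Euc N, ‖gradient φ x‖ ^ 2) := by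
          rw [ENNReal.ofReal_mul (by positivity)]
  have hInt₁ : Integrable (fun x : Euc N => φ x ^ 2 * (‖x‖ ^ 2)⁻¹) := by
    refine ⟨mf₁.aestronglyMeasurable, ?_⟩
    rw [hasFiniteIntegral_iff_ofReal (Filter.Eventually.of_forall fun x => by positivity)]
    exact lt_of_le_of_lt hkey ENNReal.ofReal_lt_top
  refine ⟨hInt₁, ?_⟩
  have hInt₁eq : ∫ x : Euc N, φ x ^ 2 * (‖x‖ ^ 2)⁻¹
      = (∫⁻ x : Euc N, ENNReal.ofReal (φ x ^ 2 * (‖x‖ ^ 2)⁻¹)).toReal := by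
    rw [integral_eq_lintegral_of_nonneg_ae (Filter.Eventually.of_forall fun x => by positivity)
      mf₁.aestronglyMeasurable]
  have htr := ENNReal.toReal_mono (by simp) hkey
  rw [ENNReal.toReal_ofReal (by positivity)] at htr
  rw [hInt₁eq]
  calc C * (∫⁻ x : Euc N, ENNReal.ofReal (φ x ^ 2 * (‖x‖ ^ 2)⁻¹)).toReal
      ≤ C * (C⁻¹ * ∫ x : Euc N, ‖gradient φ x‖ ^ 2) := by
        apply mul_le_mul_of_nonneg_left htr hCpos.le
    _ = ∫ x : Euc N, ‖gradient φ x‖ ^ 2 := by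
        rw [← mul_assoc, mul_inv_cancel₀ hCpos.ne', one_mul]

/-- For `N ≥ 11`, `p > p_c` and any nonnegative `w` bounded by the
singular profile `β^(1/(p-1)) |x|^(-2/(p-1))`, there exists `ε > 0` such that
`(p+ε) ∫ w^(p-1) φ² ≤ ∫ |∇φ|²` for all `φ ∈ C_c^∞(ℝ^N)`. -/
theorem improved_stability_of_dominated (N : ℕ) (hN : 11 ≤ N) (p : ℝ)
    (hp : pJL N < p)
    (w : Euc N → ℝ) (hwpos : ∀ x, 0 ≤ w x)
    (hwle : ∀ x : Euc N, x ≠ 0 →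
      w x ≤ betaC p N ^ (1 / (p - 1)) * ‖x‖ ^ (-2 / (p - 1))) :
    ∃ ε : ℝ, 0 < ε ∧
      ∀ φ : Euc N → ℝ, ContDiff ℝ (⊤ : ℕ∞) φ → HasCompactSupport φ →
        (p + ε) * (∫ x : Euc N, w x ^ (p - 1) * φ x ^ 2) ≤
          ∫ x : Euc N, ‖gradient φ x‖ ^ 2 := by
  obtain ⟨hp1, hb, hlt⟩ := alg_main N hN p hp
  have hn : (11:ℝ) ≤ (N:ℝ) := by exact_mod_cast hN
  refine ⟨((((N:ℝ) - 2) ^ 2 / 4) - p * betaC p N) / betaC p N,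
    div_pos (sub_pos.2 hlt) hb, ?_⟩
  intro φ hφ hφc
  set ε : ℝ := ((((N:ℝ) - 2) ^ 2 / 4) - p * betaC p N) / betaC p N with hε_def
  obtain ⟨hInt₁, hhardy⟩ := hardyN N hN φ hφ hφc
  have hRnn : 0 ≤ ∫ x : Euc N, ‖gradient φ x‖ ^ 2 := integral_nonneg fun x => by positivity
  have hεnn : 0 < ε := div_pos (sub_pos.2 hlt) hb
  have hpε : (p + ε) * betaC p N = ((N:ℝ) - 2) ^ 2 / 4 := by
    rw [hε_def]; field_simp; ring
  by_cases hw : Integrable (fun x : Euc N => w x ^ (p - 1) * φ x ^ 2)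
  · -- the integrable case
    haveI : Nontrivial (Euc N) := by
      apply Module.nontrivial_of_finrank_pos (R := ℝ) (M := Euc N)
      rw [finrank_euclideanSpace_fin]; omega
    have hae0 : ∀ᵐ x : Euc N ∂volume, x ≠ 0 := by
      rw [ae_iff]
      have hset : {x : Euc N | ¬x ≠ 0} = {0} := by ext x; simp
      rw [hset]
      exact measure_singleton 0
    have hae : ∀ᵐ x : Euc N ∂volume,
        w x ^ (p - 1) * φ x ^ 2 ≤ betaC p N * (φ x ^ 2 * (‖x‖ ^ 2)⁻¹) := by
      filter_upwards [hae0] with x hx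
      have hxn : 0 < ‖x‖ := norm_pos_iff.2 hx
      have hβnn : 0 ≤ betaC p N := hb.le
      have hpm1 : (0:ℝ) ≤ p - 1 := by linarith
      have hw1 : w x ^ (p - 1) ≤ (betaC p N ^ (1 / (p - 1)) * ‖x‖ ^ (-2 / (p - 1))) ^ (p - 1) :=
        Real.rpow_le_rpow (hwpos x) (hwle x hx) hpm1
      have hsplit : (betaC p N ^ (1 / (p - 1)) * ‖x‖ ^ (-2 / (p - 1))) ^ (p - 1)
          = betaC p N * (‖x‖ ^ 2)⁻¹ := by
        rw [Real.mul_rpow (Real.rpow_nonneg hβnn _) (Real.rpow_nonneg (norm_nonneg x) _),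
          ← Real.rpow_mul hβnn, ← Real.rpow_mul (norm_nonneg x)]
        have hne : p - 1 ≠ 0 := by linarith
        have e1 : 1 / (p - 1) * (p - 1) = 1 := by field_simp
        have e2 : -2 / (p - 1) * (p - 1) = -2 := by field_simp
        rw [e1, e2, Real.rpow_one,
          show (-2:ℝ) = -((2:ℕ):ℝ) by norm_num,
          Real.rpow_neg (norm_nonneg x), Real.rpow_natCast]
      have := mul_le_mul_of_nonneg_right (hw1.trans_eq hsplit) (sq_nonneg (φ x))
      calc w x ^ (p - 1) * φ x ^ 2 ≤ betaC p N * (‖x‖ ^ 2)⁻¹ * φ x ^ 2 := this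
        _ = betaC p N * (φ x ^ 2 * (‖x‖ ^ 2)⁻¹) := by ring
    have hmaj : Integrable (fun x : Euc N => betaC p N * (φ x ^ 2 * (‖x‖ ^ 2)⁻¹)) :=
      hInt₁.const_mul _
    have hle : (∫ x : Euc N, w x ^ (p - 1) * φ x ^ 2)
        ≤ betaC p N * ∫ x : Euc N, φ x ^ 2 * (‖x‖ ^ 2)⁻¹ := by
      calc (∫ x : Euc N, w x ^ (p - 1) * φ x ^ 2)
          ≤ ∫ x : Euc N, betaC p N * (φ x ^ 2 * (‖x‖ ^ 2)⁻¹) := integral_mono_ae hw hmaj hae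
        _ = betaC p N * ∫ x : Euc N, φ x ^ 2 * (‖x‖ ^ 2)⁻¹ := integral_const_mul _ _
    calc (p + ε) * ∫ x : Euc N, w x ^ (p - 1) * φ x ^ 2
        ≤ (p + ε) * (betaC p N * ∫ x : Euc N, φ x ^ 2 * (‖x‖ ^ 2)⁻¹) :=
          mul_le_mul_of_nonneg_left hle (by linarith)
      _ = (((N:ℝ) - 2) ^ 2 / 4) * ∫ x : Euc N, φ x ^ 2 * (‖x‖ ^ 2)⁻¹ := by
          rw [← mul_assoc, hpε]
      _ ≤ ∫ x : Euc N, ‖gradient φ x‖ ^ 2 := hhardy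
  · rw [integral_undef hw, mul_zero]
    exact hRnn
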